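/- arXiv:2210.10781 — 5 statements merged into one kernel-verified Lean document; each statement's English description precedes it below -/
import Mathlib

section
/- Let m, k be integers with 1 ≤ k < m/2, and let G be the bipartite graph whose vertices are the k-subsets and (k+1)-subsets of [m], with an edge between a k-subset a and a (k+1)-subset b iff a ⊂ b. Then for every set W of k-subsets, the neighborhood N(W) in the (k+1)-subsets satisfies (k+1)·|N(W)| ≥ (m−k)·|W|, and hence |N(W)| ≥ |W|. -/
open scoped Classical

/-- Hall-condition counting bound for the bipartite containment graph between `k`-subsets and
`(k+1)`-subsets of `[m]`: `(k+1)·|N(W)| ≥ (m−k)·|W|`, hence `|N(W)| ≥ |W|`. -/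
theorem neighborhood_counting_bound (m k : ℕ) (hk : 1 ≤ k) (hkm : 2 * k < m)
    (W : Finset (Finset (Fin m)))
    (hW : W ⊆ Finset.powersetCard k (Finset.univ : Finset (Fin m))) :
    (m - k) * W.card ≤
      (k + 1) * ((Finset.powersetCard (k + 1) (Finset.univ : Finset (Fin m))).filter
        (fun b => ∃ a ∈ W, a ⊆ b)).card ∧
    W.card ≤ ((Finset.powersetCard (k + 1) (Finset.univ : Finset (Fin m))).filter
        (fun b => ∃ a ∈ W, a ⊆ b)).card := by
  set N := (Finset.powersetCard (k + 1) (Finset.univ : Finset (Fin m))).filter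
      (fun b => ∃ a ∈ W, a ⊆ b) with hN
  -- key: each a ∈ W has exactly m - k supersets in N
  have hcardW : ∀ a ∈ W, a.card = k := by
    intro a ha
    exact (Finset.mem_powersetCard.mp (hW ha)).2
  have hsup : ∀ a ∈ W, (N.filter (fun b => a ⊆ b)).card = m - k := by
    intro a ha
    have hac : a.card = k := hcardW a ha
    have : N.filter (fun b => a ⊆ b) =
        ((Finset.univ : Finset (Fin m)) \ a).image (fun x => insert x a) := by
      ext b
      simp only [Finset.mem_filter, Finset.mem_image, Finset.mem_sdiff, Finset.mem_univ,
        true_and, hN, Finset.mem_powersetCard, Finset.subset_univ]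
      constructor
      · rintro ⟨⟨hb, -⟩, hab⟩
        obtain ⟨x, hxb, hxa⟩ : ∃ x ∈ b, x ∉ a := by
          by_contra h
          push_neg at h
          have : b ⊆ a := h
          have := Finset.card_le_card this
          omega
        refine ⟨x, hxa, ?_⟩
        apply Finset.Subset.antisymm
        · exact Finset.insert_subset hxb hab
        · intro y hy
          have : (insert x a).card = k + 1 := by
            rw [Finset.card_insert_of_notMem hxa, hac]
          have hsub : insert x a ⊆ b := Finset.insert_subset hxb hab
          exact (Finset.eq_of_subset_of_card_le hsub (by omega)) ▸ hy
      · rintro ⟨x, hxa, rfl⟩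
        refine ⟨⟨?_, a, ha, Finset.subset_insert _ _⟩, Finset.subset_insert _ _⟩
        rw [Finset.card_insert_of_notMem hxa, hac]
    rw [this, Finset.card_image_of_injOn, Finset.card_sdiff_of_subset (Finset.subset_univ a),
      Finset.card_univ, Fintype.card_fin, hac]
    intro x hx y hy hxy
    simp only [Finset.coe_sdiff, Set.mem_diff, Finset.coe_univ, Finset.mem_coe] at hx hy
    by_contra hne
    have hxy' : insert x a = insert y a := hxy
    have : x ∈ insert y a := hxy' ▸ Finset.mem_insert_self x a
    rcases Finset.mem_insert.mp this with h | h
    · exact hne h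
    · exact hx.2 h
  -- double counting
  have hdc : ∑ a ∈ W, (N.filter (fun b => a ⊆ b)).card
      = ∑ b ∈ N, (W.filter (fun a => a ⊆ b)).card := by
    simp_rw [Finset.card_filter]
    rw [Finset.sum_comm]
  have hleft : (m - k) * W.card = ∑ a ∈ W, (N.filter (fun b => a ⊆ b)).card := by
    rw [Finset.sum_congr rfl hsup, Finset.sum_const, smul_eq_mul, mul_comm]
  have hright : ∑ b ∈ N, (W.filter (fun a => a ⊆ b)).card ≤ (k + 1) * N.card := by
    rw [mul_comm]
    apply Finset.sum_le_card_nsmul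
    intro b hb
    simp only [hN, Finset.mem_filter, Finset.mem_powersetCard] at hb
    calc (W.filter (fun a => a ⊆ b)).card ≤ (b.powersetCard k).card := by
          apply Finset.card_le_card
          intro a ha
          simp only [Finset.mem_filter] at ha
          exact Finset.mem_powersetCard.mpr ⟨ha.2, hcardW a ha.1⟩
      _ = (k + 1).choose k := by rw [Finset.card_powersetCard, hb.1.2]
      _ = k + 1 := Nat.choose_succ_self_right k
  have h1 : (m - k) * W.card ≤ (k + 1) * N.card := by
    rw [hleft, hdc]; exact hright
  refine ⟨h1, ?_⟩
  have h2 : (k + 1) * W.card ≤ (m - k) * W.card :=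
    Nat.mul_le_mul_right _ (by omega)
  exact Nat.le_of_mul_le_mul_left (le_trans h2 h1) (by omega)
end

section
/- Let T be the class of decision stumps on ℝ^ℓ with threshold-split rules, i.e., classifiers of the form x ↦ sign-based routing on [x_i ≤ θ] for some i ∈ [ℓ], θ ∈ ℝ, with two labeled leaves. Then for any m points in ℝ^ℓ, the number of distinct 2-partitions realizable by stumps is at most (1/2) · Σ_{k=1}^{m−1} min{2ℓ, C(m,k)}. -/
open scoped Classical

/-!
Record a realizable partition by one of its two blocks, a *cut* `A ⊆ S`; each partition
`{A, S \ A}` then arises from exactly two cuts. For a fixed feature and a fixed side, the cuts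
`{x ∈ S | f i x ≤ θ}` are nested as `θ` grows, so at most one of them has any given size `k`.
Hence there are at most `2ℓ` cuts of size `k`, and trivially at most `C(m, k)`; summing over
`1 ≤ k ≤ m - 1` bounds twice the number of partitions.
-/

open Finset

namespace ThresholdCut

variable {α ι β : Type*} [LinearOrder β]

lemma filter_le_eq_of_card_eq (S : Finset α) {g : α → β} {θ θ' : β}
    (h : #{x ∈ S | g x ≤ θ} = #{x ∈ S | g x ≤ θ'}) :
    {x ∈ S | g x ≤ θ} = {x ∈ S | g x ≤ θ'} := by
  wlog hθ : θ ≤ θ' generalizing θ θ'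
  · exact (this h.symm (le_of_not_ge hθ)).symm
  exact eq_of_subset_of_card_le (monotone_filter_right S fun _ _ hx => hx.trans hθ) h.ge

variable [DecidableEq α] (f : ι → α → β) (S : Finset α)

/-- The second disjunct is the cut `{x ∈ S | θ < f i x}` from the upper side. -/
def IsThresholdCut (A : Finset α) : Prop :=
  ∃ i θ, {x ∈ S | f i x ≤ θ} = A ∨ {x ∈ S | f i x ≤ θ} = S \ A

noncomputable def cuts : Finset (Finset α) :=
  {A ∈ S.powerset | A.Nonempty ∧ (S \ A).Nonempty ∧ IsThresholdCut f S A}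

noncomputable def partitions : Finset (Finset (Finset α)) :=
  (cuts f S).image fun A => {A, S \ A}

variable {f S}

lemma mem_cuts {A : Finset α} :
    A ∈ cuts f S ↔ A ⊆ S ∧ A.Nonempty ∧ (S \ A).Nonempty ∧ IsThresholdCut f S A := by
  simp only [cuts, mem_filter, mem_powerset]

lemma sdiff_mem_cuts {A : Finset α} (hA : A ∈ cuts f S) : S \ A ∈ cuts f S := by
  obtain ⟨hAS, hne, hne', i, θ, h⟩ := mem_cuts.1 hA
  rw [← Finset.sdiff_sdiff_eq_self hAS] at hne
  refine mem_cuts.2 ⟨sdiff_subset, hne', hne, i, θ, ?_⟩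
  rwa [Finset.sdiff_sdiff_eq_self hAS, or_comm]

lemma mem_partitions {P : Finset (Finset α)} :
    P ∈ partitions f S ↔ ∃ i θ, {x ∈ S | f i x ≤ θ}.Nonempty ∧
      (S \ {x ∈ S | f i x ≤ θ}).Nonempty ∧
      P = {{x ∈ S | f i x ≤ θ}, S \ {x ∈ S | f i x ≤ θ}} := by
  constructor
  · intro hP
    obtain ⟨A, hA, rfl⟩ := mem_image.1 hP
    obtain ⟨hAS, hne, hne', i, θ, h | h⟩ := mem_cuts.1 hA
    · exact ⟨i, θ, h ▸ hne, h ▸ hne', h ▸ rfl⟩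
    · refine ⟨i, θ, h ▸ hne', ?_, ?_⟩
      · rwa [h, Finset.sdiff_sdiff_eq_self hAS]
      · rw [h, Finset.sdiff_sdiff_eq_self hAS, pair_comm]
  · rintro ⟨i, θ, hne, hne', rfl⟩
    exact mem_image_of_mem _ (mem_cuts.2 ⟨filter_subset _ _, hne, hne', i, θ, Or.inl rfl⟩)

lemma two_mul_card_partitions_le : 2 * #(partitions f S) ≤ #(cuts f S) := by
  refine mul_card_image_le_card _ 2 fun P hP => ?_
  obtain ⟨A, hA, rfl⟩ := mem_image.1 hP
  have hAS : A ⊆ S := (mem_cuts.1 hA).1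
  have hne : A ≠ S \ A := fun h => by
    obtain ⟨x, hx⟩ := (mem_cuts.1 hA).2.1
    exact (mem_sdiff.1 (h ▸ hx)).2 hx
  calc 2 = #{A, S \ A} := (card_pair hne).symm
    _ ≤ _ := card_le_card fun B hB => by
      rcases mem_insert.1 hB with rfl | hB
      · exact mem_filter.2 ⟨hA, rfl⟩
      · rw [mem_singleton.1 hB]
        refine mem_filter.2 ⟨sdiff_mem_cuts hA, ?_⟩
        rw [Finset.sdiff_sdiff_eq_self hAS, pair_comm]

lemma eq_of_card_eq_of_filter_le_eq_ite {A A' : Finset α} (hA : A ⊆ S) (hA' : A' ⊆ S)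
    (hk : #A = #A') {g : α → β} {θ θ' : β} {b : Bool}
    (hθ : {x ∈ S | g x ≤ θ} = if b then A else S \ A)
    (hθ' : {x ∈ S | g x ≤ θ'} = if b then A' else S \ A') : A = A' := by
  cases b <;> simp only [Bool.false_eq_true, if_true, if_false] at hθ hθ'
  · have : S \ A = S \ A' := by
      rw [← hθ, ← hθ']
      refine filter_le_eq_of_card_eq S ?_
      rw [hθ, hθ', card_sdiff_of_subset hA, card_sdiff_of_subset hA', hk]
    rw [← Finset.sdiff_sdiff_eq_self hA, this, Finset.sdiff_sdiff_eq_self hA']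
  · rw [← hθ, ← hθ']
    exact filter_le_eq_of_card_eq S (by rw [hθ, hθ', hk])

lemma card_filter_cuts_card_eq_le_two_mul [Fintype ι] (k : ℕ) :
    #{A ∈ cuts f S | #A = k} ≤ 2 * Fintype.card ι := by
  calc #{A ∈ cuts f S | #A = k} ≤ #(univ : Finset (ι × Bool)) := by
        refine card_le_card_of_forall_subsingleton
          (fun A (p : ι × Bool) => ∃ θ, {x ∈ S | f p.1 x ≤ θ} = if p.2 then A else S \ A)
          (fun A hA => ?_) (fun p _ => ?_)
        · obtain ⟨i, θ, h | h⟩ := (mem_cuts.1 (mem_filter.1 hA).1).2.2.2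
          · exact ⟨(i, true), mem_univ _, θ, h⟩
          · exact ⟨(i, false), mem_univ _, θ, h⟩
        rintro A ⟨hA, θ, hθ⟩ A' ⟨hA', θ', hθ'⟩
        rw [mem_filter] at hA hA'
        exact eq_of_card_eq_of_filter_le_eq_ite (mem_cuts.1 hA.1).1 (mem_cuts.1 hA'.1).1
          (hA.2.trans hA'.2.symm) hθ hθ'
    _ = 2 * Fintype.card ι := by simp [mul_comm]

lemma card_filter_cuts_card_eq_le_choose (k : ℕ) :
    #{A ∈ cuts f S | #A = k} ≤ (#S).choose k := by
  rw [← card_powersetCard]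
  refine card_le_card fun A hA => ?_
  obtain ⟨hA, hk⟩ := mem_filter.1 hA
  exact mem_powersetCard.2 ⟨(mem_cuts.1 hA).1, hk⟩

lemma card_cuts_le [Fintype ι] :
    #(cuts f S) ≤ ∑ k ∈ Icc 1 (#S - 1), min (2 * Fintype.card ι) ((#S).choose k) := by
  have hcard : ∀ A ∈ cuts f S, #A ∈ Icc 1 (#S - 1) := fun A hA => by
    obtain ⟨hAS, hne, hne', -⟩ := mem_cuts.1 hA
    have := card_sdiff_add_card_eq_card hAS
    have := hne.card_pos
    have := hne'.card_pos
    exact mem_Icc.2 ⟨by omega, by omega⟩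
  rw [card_eq_sum_card_fiberwise hcard]
  exact sum_le_sum fun k _ =>
    le_min (card_filter_cuts_card_eq_le_two_mul k) (card_filter_cuts_card_eq_le_choose k)

end ThresholdCut

open ThresholdCut in
/-- Upper bound on the number of distinct 2-partitions of any `m`-point sample in `ℝ^ℓ`
realizable by threshold-split decision stumps:
`#partitions ≤ (1/2)·Σ_{k=1}^{m−1} min{2ℓ, C(m,k)}` (stated multiplied by 2). -/
theorem stump_two_partition_bound (ℓ m : ℕ) (S : Finset (Fin ℓ → ℝ)) (hS : S.card = m) :
    2 * Set.ncard {P : Finset (Finset (Fin ℓ → ℝ)) |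
        ∃ (i : Fin ℓ) (θ : ℝ),
          (S.filter (fun x => x i ≤ θ)).Nonempty ∧
          (S.filter (fun x => ¬ x i ≤ θ)).Nonempty ∧
          P = {S.filter (fun x => x i ≤ θ), S.filter (fun x => ¬ x i ≤ θ)}} ≤
      ∑ k ∈ Finset.Icc 1 (m - 1), min (2 * ℓ) (m.choose k) := by
  have key := two_mul_card_partitions_le.trans
    (card_cuts_le (f := fun i (x : Fin ℓ → ℝ) => x i) (S := S))
  rw [Fintype.card_fin, ← Set.ncard_coe_finset, hS] at key
  refine Eq.trans_le ?_ key
  congr 2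
  ext P
  simp only [Set.mem_ofPred_eq, mem_coe, mem_partitions, filter_not]
end

section
/- For any m ≥ 1 and ℓ ≥ 1 with 2ℓ ≤ m, there exists a sample S of m points in ℝ^ℓ such that the number of distinct 2-partitions of S realizable by threshold-split decision stumps equals ℓ·(m−1). -/
open scoped Classical

/-- Value of point `j` in coordinate `i` (construction for the attainment sample). -/
def vv (m i j : ℕ) : ℤ :=
  if j = 2*i then -1
  else if j = 2*i+1 then (m : ℤ)
  else if j = 2*i+2 ∧ 2*i+3 < m then 2*(i:ℤ)+3
  else if j = 2*i+3 then 2*(i:ℤ)+2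
  else (j : ℤ)

/-- Canonical threshold realizing the size-`k` lower set in coordinate `i`. -/
def th (i k : ℕ) : ℤ := if k < 2*i+2 then (k:ℤ)-2 else (k:ℤ)

lemma vv_eq1 (m i j : ℕ) (h : j = 2*i) : vv m i j = -1 := by
  unfold vv; split_ifs <;> omega

lemma vv_eq2 (m i j : ℕ) (h : j = 2*i+1) : vv m i j = (m:ℤ) := by
  unfold vv; split_ifs <;> omega

lemma vv_eq3 (m i j : ℕ) (h : j = 2*i+2) (h2 : 2*i+3 < m) : vv m i j = 2*(i:ℤ)+3 := by
  unfold vv; split_ifs <;> omega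

lemma vv_eq3' (m i j : ℕ) (h : j = 2*i+2) (h2 : ¬ 2*i+3 < m) : vv m i j = (j:ℤ) := by
  unfold vv; split_ifs <;> omega

lemma vv_eq4 (m i j : ℕ) (h : j = 2*i+3) : vv m i j = 2*(i:ℤ)+2 := by
  unfold vv; split_ifs <;> omega

lemma vv_eq5 (m i j : ℕ) (h1 : j ≠ 2*i) (h2 : j ≠ 2*i+1) (h3 : j ≠ 2*i+2) (h4 : j ≠ 2*i+3) :
    vv m i j = (j:ℤ) := by
  unfold vv; split_ifs <;> omega

lemma vv_ge (m i j : ℕ) : -1 ≤ vv m i j := by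
  unfold vv; split_ifs <;> omega

lemma vv_le (m i j : ℕ) (hj : j < m) : vv m i j ≤ (m:ℤ) := by
  unfold vv; split_ifs <;> omega

lemma vv_ne (m i j : ℕ) (hj : j < m) (him : 2*i+1 < m) :
    vv m i j ≠ 2*(i:ℤ) ∧ vv m i j ≠ 2*(i:ℤ)+1 := by
  unfold vv; split_ifs <;> omega

lemma vv_inj (m i : ℕ) {j j' : ℕ} (hj : j < m) (hj' : j' < m)
    (h : vv m i j = vv m i j') : j = j' := by
  unfold vv at h; split_ifs at h <;> omega

lemma th_bounds (i k m : ℕ) (hk : 1 ≤ k) (hkm : k < m) :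
    -1 ≤ th i k ∧ th i k < (m:ℤ) := by
  unfold th; split_ifs <;> omega

/-- Distinct coordinates never give the same proper nonempty lower set. -/
lemma lemA {ℓ m i i' : ℕ} (hm : 2*ℓ ≤ m) (hi : i < ℓ) (hi' : i' < ℓ) (hii : i < i')
    {s s' : ℤ} (hs1 : -1 ≤ s) (hs2 : s < m) (hs1' : -1 ≤ s') (hs2' : s' < m)
    (H : ∀ j, j < m → (vv m i j ≤ s ↔ vv m i' j ≤ s')) : False := by
  by_cases hc : i' = i+1
  · subst hc
    have H3 := H (2*i+2) (by omega)
    rw [vv_eq3 m i (2*i+2) rfl (by omega), vv_eq1 m (i+1) (2*i+2) (by omega)] at H3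
    have H4 := H (2*i+3) (by omega)
    rw [vv_eq4 m i (2*i+3) rfl, vv_eq2 m (i+1) (2*i+3) (by omega)] at H4
    omega
  · have H2 := H (2*i+1) (by omega)
    rw [vv_eq2 m i (2*i+1) rfl,
        vv_eq5 m i' (2*i+1) (by omega) (by omega) (by omega) (by omega)] at H2
    have H3 := H (2*i') (by omega)
    rw [vv_eq5 m i (2*i') (by omega) (by omega) (by omega) (by omega),
        vv_eq1 m i' (2*i') rfl] at H3
    have H5 := H (2*i+3) (by omega)
    rw [vv_eq4 m i (2*i+3) rfl,
        vv_eq5 m i' (2*i+3) (by omega) (by omega) (by omega) (by omega)] at H5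
    omega

/-- A proper nonempty lower set is never a proper nonempty upper set (any two coordinates). -/
lemma lemB {ℓ m i i' : ℕ} (hm : 2*ℓ ≤ m) (hℓ : 1 ≤ ℓ) (hi : i < ℓ) (hi' : i' < ℓ)
    {s s' : ℤ} (hs1 : -1 ≤ s) (hs2 : s < m) (hs1' : -1 ≤ s') (hs2' : s' < m)
    (H : ∀ j, j < m → (vv m i j ≤ s ↔ ¬ vv m i' j ≤ s')) : False := by
  rcases lt_trichotomy i i' with hlt | heq | hgt
  · have H1 := H (2*i) (by omega)
    rw [vv_eq1 m i (2*i) rfl,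
        vv_eq5 m i' (2*i) (by omega) (by omega) (by omega) (by omega)] at H1
    have H2 := H (2*i+1) (by omega)
    rw [vv_eq2 m i (2*i+1) rfl,
        vv_eq5 m i' (2*i+1) (by omega) (by omega) (by omega) (by omega)] at H2
    omega
  · subst heq
    have H1 := H (2*i) (by omega)
    rw [vv_eq1 m i (2*i) rfl] at H1
    omega
  · have H1 := H (2*i') (by omega)
    rw [vv_eq5 m i (2*i') (by omega) (by omega) (by omega) (by omega),
        vv_eq1 m i' (2*i') rfl] at H1
    have H2 := H (2*i'+1) (by omega)
    rw [vv_eq5 m i (2*i'+1) (by omega) (by omega) (by omega) (by omega),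
        vv_eq2 m i' (2*i'+1) rfl] at H2
    omega

/-- Strict monotonicity witness: a point below the level-`k'` threshold but above level `k`. -/
lemma lemC {ℓ m i k k' : ℕ} (hm : 2*ℓ ≤ m) (hi : i < ℓ) (hk : 1 ≤ k) (hkk : k < k')
    (hk'm : k' < m) :
    ∃ j, j < m ∧ vv m i j ≤ th i k' ∧ ¬ vv m i j ≤ th i k := by
  by_cases c1 : k' < 2*i+2
  · refine ⟨k'-2, by omega, ?_, ?_⟩ <;>
      rw [vv_eq5 m i (k'-2) (by omega) (by omega) (by omega) (by omega)] <;>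
      (unfold th; split_ifs <;> omega)
  · by_cases c2 : k' = 2*i+2
    · by_cases c3 : 2*i+3 < m
      · refine ⟨2*i+3, by omega, ?_, ?_⟩ <;> rw [vv_eq4 m i (2*i+3) rfl] <;>
          (unfold th; split_ifs <;> omega)
      · refine ⟨2*i+2, by omega, ?_, ?_⟩ <;> rw [vv_eq3' m i (2*i+2) rfl c3] <;>
          (unfold th; split_ifs <;> omega)
    · by_cases c4 : k' = 2*i+3
      · refine ⟨2*i+2, by omega, ?_, ?_⟩ <;> rw [vv_eq3 m i (2*i+2) rfl (by omega)] <;>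
          (unfold th; split_ifs <;> omega)
      · refine ⟨k', by omega, ?_, ?_⟩ <;>
          rw [vv_eq5 m i k' (by omega) (by omega) (by omega) (by omega)] <;>
          (unfold th; split_ifs <;> omega)

/-- Every integer threshold in range is equivalent to a canonical one. -/
lemma lemD {ℓ m i : ℕ} (hm : 2*ℓ ≤ m) (hi : i < ℓ) {t : ℤ} (ht1 : -1 ≤ t) (ht2 : t < m) :
    ∃ k, 1 ≤ k ∧ k < m ∧ ∀ j, j < m → (vv m i j ≤ t ↔ vv m i j ≤ th i k) := by
  by_cases c1 : t < 2*i
  · refine ⟨(t+2).toNat, by omega, by omega, fun j hj => ?_⟩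
    have : th i (t+2).toNat = t := by unfold th; split_ifs <;> omega
    rw [this]
  · by_cases c2 : t ≤ 2*i+1
    · refine ⟨2*i+1, by omega, by omega, fun j hj => ?_⟩
      have hth : th i (2*i+1) = 2*(i:ℤ)-1 := by unfold th; split_ifs <;> omega
      rw [hth]
      have := vv_ne m i j hj (by omega)
      omega
    · refine ⟨t.toNat, by omega, by omega, fun j hj => ?_⟩
      have : th i t.toNat = t := by unfold th; split_ifs <;> omega
      rw [this]
noncomputable section AuxStump

/-- The sample points. -/
def pt (ℓ m : ℕ) : Fin m → (Fin ℓ → ℝ) := fun j i => ((vv m i.val j.val : ℤ) : ℝ)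

/-- The sample. -/
def SS (ℓ m : ℕ) : Finset (Fin ℓ → ℝ) := Finset.univ.image (pt ℓ m)

/-- The canonical partitions. -/
def partn (ℓ m : ℕ) (q : Fin ℓ × Fin (m-1)) : Finset (Finset (Fin ℓ → ℝ)) :=
  {(SS ℓ m).filter (fun x => x q.1 ≤ ((th q.1.val (q.2.val+1) : ℤ) : ℝ)),
   (SS ℓ m).filter (fun x => ¬ x q.1 ≤ ((th q.1.val (q.2.val+1) : ℤ) : ℝ))}

lemma pt_inj (ℓ m : ℕ) (hℓ : 1 ≤ ℓ) : Function.Injective (pt ℓ m) := by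
  intro j j' hjj
  have h2 := congrFun hjj ⟨0, hℓ⟩
  simp only [pt] at h2
  exact Fin.ext (vv_inj m 0 j.isLt j'.isLt (by exact_mod_cast h2))

lemma mem_SS (ℓ m : ℕ) (j : Fin m) : pt ℓ m j ∈ SS ℓ m :=
  Finset.mem_image_of_mem _ (Finset.mem_univ _)

lemma mem_SS' {ℓ m : ℕ} {x : Fin ℓ → ℝ} (hx : x ∈ SS ℓ m) : ∃ j, pt ℓ m j = x := by
  simpa [SS, Finset.mem_image] using hx

lemma mem_filter_le {ℓ m : ℕ} (i : Fin ℓ) (θ : ℝ) (j : Fin m) :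
    pt ℓ m j ∈ (SS ℓ m).filter (fun x => x i ≤ θ) ↔ ((vv m i.val j.val : ℤ) : ℝ) ≤ θ := by
  constructor
  · intro hx; exact (Finset.mem_filter.mp hx).2
  · intro hx; exact Finset.mem_filter.mpr ⟨mem_SS ℓ m j, hx⟩

lemma mem_filter_nle {ℓ m : ℕ} (i : Fin ℓ) (θ : ℝ) (j : Fin m) :
    pt ℓ m j ∈ (SS ℓ m).filter (fun x => ¬ x i ≤ θ) ↔ ¬ ((vv m i.val j.val : ℤ) : ℝ) ≤ θ := by
  constructor
  · intro hx; exact (Finset.mem_filter.mp hx).2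
  · intro hx; exact Finset.mem_filter.mpr ⟨mem_SS ℓ m j, hx⟩

lemma filter_le_congr {ℓ m : ℕ} (i i' : Fin ℓ) (a b : ℝ)
    (hab : ∀ j : Fin m, (((vv m i.val j.val : ℤ) : ℝ) ≤ a ↔ ((vv m i'.val j.val : ℤ) : ℝ) ≤ b)) :
    (SS ℓ m).filter (fun x => x i ≤ a) = (SS ℓ m).filter (fun x => x i' ≤ b) := by
  ext x
  simp only [Finset.mem_filter]
  constructor
  · rintro ⟨hxS, hx⟩
    obtain ⟨j, rfl⟩ := mem_SS' hxS
    exact ⟨hxS, (hab j).mp hx⟩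
  · rintro ⟨hxS, hx⟩
    obtain ⟨j, rfl⟩ := mem_SS' hxS
    exact ⟨hxS, (hab j).mpr hx⟩

lemma filter_nle_congr {ℓ m : ℕ} (i i' : Fin ℓ) (a b : ℝ)
    (hab : ∀ j : Fin m, (((vv m i.val j.val : ℤ) : ℝ) ≤ a ↔ ((vv m i'.val j.val : ℤ) : ℝ) ≤ b)) :
    (SS ℓ m).filter (fun x => ¬ x i ≤ a) = (SS ℓ m).filter (fun x => ¬ x i' ≤ b) := by
  ext x
  simp only [Finset.mem_filter]
  constructor
  · rintro ⟨hxS, hx⟩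
    obtain ⟨j, rfl⟩ := mem_SS' hxS
    exact ⟨hxS, fun hb => hx ((hab j).mpr hb)⟩
  · rintro ⟨hxS, hx⟩
    obtain ⟨j, rfl⟩ := mem_SS' hxS
    exact ⟨hxS, fun hb => hx ((hab j).mp hb)⟩

lemma iff_of_filter_le_eq {ℓ m : ℕ} {i i' : Fin ℓ} {a b : ℝ}
    (he : (SS ℓ m).filter (fun x => x i ≤ a) = (SS ℓ m).filter (fun x => x i' ≤ b)) :
    ∀ j : Fin m, (((vv m i.val j.val : ℤ) : ℝ) ≤ a ↔ ((vv m i'.val j.val : ℤ) : ℝ) ≤ b) := by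
  intro j
  rw [← mem_filter_le, ← mem_filter_le, he]

lemma iff_of_filter_le_eq_nle {ℓ m : ℕ} {i i' : Fin ℓ} {a b : ℝ}
    (he : (SS ℓ m).filter (fun x => x i ≤ a) = (SS ℓ m).filter (fun x => ¬ x i' ≤ b)) :
    ∀ j : Fin m, (((vv m i.val j.val : ℤ) : ℝ) ≤ a ↔ ¬ ((vv m i'.val j.val : ℤ) : ℝ) ≤ b) := by
  intro j
  rw [← mem_filter_le, ← mem_filter_nle, he]

lemma partn_inj {ℓ m : ℕ} (hℓ : 1 ≤ ℓ) (hm : 1 ≤ m) (h : 2 * ℓ ≤ m) :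
    Function.Injective (partn ℓ m) := by
  rintro ⟨i, k⟩ ⟨i', k'⟩ hpq
  simp only [partn] at hpq
  have hkm : k.val + 1 < m := by have := k.isLt; omega
  have hkm' : k'.val + 1 < m := by have := k'.isLt; omega
  have hb := th_bounds i.val (k.val+1) m (by omega) hkm
  have hb' := th_bounds i'.val (k'.val+1) m (by omega) hkm'
  have hA : (SS ℓ m).filter (fun x => x i ≤ ((th i.val (k.val+1) : ℤ) : ℝ)) ∈
      ({(SS ℓ m).filter (fun x => x i' ≤ ((th i'.val (k'.val+1) : ℤ) : ℝ)),
        (SS ℓ m).filter (fun x => ¬ x i' ≤ ((th i'.val (k'.val+1) : ℤ) : ℝ))} :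
        Finset (Finset (Fin ℓ → ℝ))) := by
    rw [← hpq]; exact Finset.mem_insert_self _ _
  rcases Finset.mem_insert.mp hA with hAA | hAB
  · have HR := iff_of_filter_le_eq hAA
    have HZ : ∀ j, j < m →
        (vv m i.val j ≤ th i.val (k.val+1) ↔ vv m i'.val j ≤ th i'.val (k'.val+1)) := by
      intro j hj
      have := HR ⟨j, hj⟩
      constructor
      · intro hx; exact_mod_cast this.mp (by exact_mod_cast hx)
      · intro hx; exact_mod_cast this.mpr (by exact_mod_cast hx)
    have hii : i = i' := by
      by_contra hne
      have hvne : i.val ≠ i'.val := fun hv => hne (Fin.ext hv)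
      rcases Nat.lt_or_ge i.val i'.val with hlt | hge
      · exact lemA h i.isLt i'.isLt hlt hb.1 hb.2 hb'.1 hb'.2 HZ
      · exact lemA h i'.isLt i.isLt (by omega) hb'.1 hb'.2 hb.1 hb.2
          (fun j hj => (HZ j hj).symm)
    subst hii
    have hkk : k = k' := by
      by_contra hne
      have hvne : k.val ≠ k'.val := fun hv => hne (Fin.ext hv)
      rcases Nat.lt_or_ge k.val k'.val with hlt | hge
      · obtain ⟨j, hj, hj1, hj2⟩ := lemC h i.isLt (by omega : 1 ≤ k.val + 1)
          (by omega : k.val + 1 < k'.val + 1) hkm'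
        exact hj2 ((HZ j hj).mpr hj1)
      · obtain ⟨j, hj, hj1, hj2⟩ := lemC h i.isLt (by omega : 1 ≤ k'.val + 1)
          (by omega : k'.val + 1 < k.val + 1) hkm
        exact hj2 ((HZ j hj).mp hj1)
    rw [hkk]
  · have HR := iff_of_filter_le_eq_nle (Finset.mem_singleton.mp hAB)
    have HZ : ∀ j, j < m →
        (vv m i.val j ≤ th i.val (k.val+1) ↔ ¬ vv m i'.val j ≤ th i'.val (k'.val+1)) := by
      intro j hj
      have := HR ⟨j, hj⟩
      constructor
      · intro hx hy; exact this.mp (by exact_mod_cast hx) (by exact_mod_cast hy)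
      · intro hx; exact_mod_cast this.mpr (fun hy => hx (by exact_mod_cast hy))
    exact (lemB h hℓ i.isLt i'.isLt hb.1 hb.2 hb'.1 hb'.2 HZ).elim

end AuxStump
/-- For `1 ≤ ℓ`, `1 ≤ m` with `2ℓ ≤ m`, there exists an `m`-point sample in `ℝ^ℓ` on which
the number of distinct 2-partitions realizable by threshold-split stumps equals `ℓ·(m−1)`. -/
theorem stump_two_partition_bound_attained (ℓ m : ℕ) (hℓ : 1 ≤ ℓ) (hm : 1 ≤ m)
    (h : 2 * ℓ ≤ m) :
    ∃ S : Finset (Fin ℓ → ℝ), S.card = m ∧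
      Set.ncard {P : Finset (Finset (Fin ℓ → ℝ)) |
        ∃ (i : Fin ℓ) (θ : ℝ),
          (S.filter (fun x => x i ≤ θ)).Nonempty ∧
          (S.filter (fun x => ¬ x i ≤ θ)).Nonempty ∧
          P = {S.filter (fun x => x i ≤ θ), S.filter (fun x => ¬ x i ≤ θ)}} =
        ℓ * (m - 1) := by
  refine ⟨SS ℓ m, ?_, ?_⟩
  · rw [SS, Finset.card_image_of_injective _ (pt_inj ℓ m hℓ), Finset.card_univ,
      Fintype.card_fin]
  · have key : {P : Finset (Finset (Fin ℓ → ℝ)) |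
        ∃ (i : Fin ℓ) (θ : ℝ),
          ((SS ℓ m).filter (fun x => x i ≤ θ)).Nonempty ∧
          ((SS ℓ m).filter (fun x => ¬ x i ≤ θ)).Nonempty ∧
          P = {(SS ℓ m).filter (fun x => x i ≤ θ), (SS ℓ m).filter (fun x => ¬ x i ≤ θ)}} =
        ↑(Finset.image (partn ℓ m) Finset.univ) := by
      ext P
      simp only [Set.mem_setOf_eq, Finset.coe_image, Set.mem_image, Finset.mem_coe,
        Finset.mem_univ]
      constructor
      · rintro ⟨i, θ, hne1, hne2, rfl⟩
        obtain ⟨x1, hx1⟩ := hne1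
        obtain ⟨j1, rfl⟩ := mem_SS' (Finset.mem_filter.mp hx1).1
        have hv1 : ((vv m i.val j1.val : ℤ) : ℝ) ≤ θ := (mem_filter_le i θ j1).mp hx1
        have ht1 : -1 ≤ ⌊θ⌋ := le_trans (vv_ge m i.val j1.val) (Int.le_floor.mpr hv1)
        obtain ⟨x2, hx2⟩ := hne2
        obtain ⟨j2, rfl⟩ := mem_SS' (Finset.mem_filter.mp hx2).1
        have hv2 : ¬ ((vv m i.val j2.val : ℤ) : ℝ) ≤ θ := (mem_filter_nle i θ j2).mp hx2
        have ht2 : ⌊θ⌋ < (m : ℤ) :=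
          lt_of_lt_of_le (Int.floor_lt.mpr (lt_of_not_ge hv2)) (vv_le m i.val j2.val j2.isLt)
        obtain ⟨k, hk1, hk2, hiff⟩ := lemD h i.isLt ht1 ht2
        refine ⟨(i, ⟨k - 1, by omega⟩), ?_⟩
        have hiff2 : ∀ j : Fin m,
            (((vv m i.val j.val : ℤ) : ℝ) ≤ ((th i.val k : ℤ) : ℝ) ↔
              ((vv m i.val j.val : ℤ) : ℝ) ≤ θ) := by
          intro j
          rw [Int.cast_le, ← Int.le_floor]
          exact (hiff j.val j.isLt).symm
        simp only [partn]
        rw [show (⟨k - 1, by omega⟩ : Fin (m-1)).val + 1 = k from by simp; omega]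
        rw [filter_le_congr i i _ θ hiff2, filter_nle_congr i i _ θ hiff2]
        exact ⟨trivial, rfl⟩
      · rintro ⟨⟨i, kk⟩, -, rfl⟩
        have hkm : kk.val + 1 < m := by have := kk.isLt; omega
        have hb := th_bounds i.val (kk.val + 1) m (by omega) hkm
        have h2i : 2 * i.val < m := by have := i.isLt; omega
        have h2i1 : 2 * i.val + 1 < m := by have := i.isLt; omega
        refine ⟨i, ((th i.val (kk.val + 1) : ℤ) : ℝ), ?_, ?_, ?_⟩
        · refine ⟨pt ℓ m ⟨2 * i.val, h2i⟩, (mem_filter_le i _ _).mpr ?_⟩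
          rw [Int.cast_le, vv_eq1 m i.val (2 * i.val) rfl]
          exact hb.1
        · refine ⟨pt ℓ m ⟨2 * i.val + 1, h2i1⟩, (mem_filter_nle i _ _).mpr ?_⟩
          rw [Int.cast_le, vv_eq2 m i.val (2 * i.val + 1) rfl]
          omega
        · simp only [partn]
    rw [key, Set.ncard_coe_finset,
      Finset.card_image_of_injective _ (partn_inj hℓ hm h), Finset.card_univ]
    simp
end

section
/- Let T be a fixed binary decision tree structure with L_T leaves using threshold-split rules on ℝ^ℓ. If m ≤ L_T, then for every c ≤ m the c-partitioning function satisfies π^c_T(m) = S(m,c), the Stirling number of the second kind, i.e., the tree can realize every c-partition of some m-point sample. -/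
/-! A tree with `L` leaves can give arbitrary labels to `L` points lying on a line: split on one
coordinate between consecutive points, each leaf taking care of one run of consecutive points.
Hence on the sample `{j • (1, …, 1) | j < m}` with `m ≤ L` every partition is realized, by
labelling each point with the index of its block, while on any sample the realized `c`-partitions
are among all `c`-partitions. These are counted by the Stirling recurrence: a partition of
`insert a S` either has `{a}` as a block (erase it) or arises from a partition of `S` by adding
`a` to one of its `c` blocks. -/

open scoped Classical

/-- Binary tree structures. -/
inductive BTree : Type
  | leaf : BTree
  | node : BTree → BTree → BTree

/-- Number of leaves of a binary tree structure. -/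
def BTree.leaves : BTree → ℕ
  | .leaf => 1
  | .node l r => l.leaves + r.leaves

/-- A function `f : ℝ^ℓ → ℕ` is realized by the tree structure `t` with threshold-split rules:
each leaf carries a free label, each internal node a free feature `i` and threshold `θ`. -/
inductive BTree.Realizes (ℓ : ℕ) : BTree → ((Fin ℓ → ℝ) → ℕ) → Prop
  | leaf (y : ℕ) : BTree.Realizes ℓ .leaf (fun _ => y)
  | node (l r : BTree) (i : Fin ℓ) (θ : ℝ) (fl fr : (Fin ℓ → ℝ) → ℕ) :
      BTree.Realizes ℓ l fl → BTree.Realizes ℓ r fr →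
      BTree.Realizes ℓ (.node l r) (fun x => if x i ≤ θ then fl x else fr x)

/-- The `c`-partitioning function of the tree class `t` on `ℝ^ℓ`: the largest number of
distinct `c`-part fiber partitions realizable on samples of size `m`. -/
noncomputable def BTree.partFn (ℓ : ℕ) (t : BTree) (c m : ℕ) : ℕ :=
  sSup {n | ∃ S : Finset (Fin ℓ → ℝ), S.card = m ∧
    n = Set.ncard {P : Finset (Finset (Fin ℓ → ℝ)) | ∃ f, BTree.Realizes ℓ t f ∧
      P = (S.image f).image (fun v => S.filter (fun x => f x = v)) ∧ P.card = c}}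

/-- Stirling numbers of the second kind. -/
def stirling2 : ℕ → ℕ → ℕ
  | 0, 0 => 1
  | 0, _ + 1 => 0
  | _ + 1, 0 => 0
  | n + 1, k + 1 => (k + 1) * stirling2 n (k + 1) + stirling2 n k

open Finset

section Partitions

variable {α : Type*} [DecidableEq α] {P Q : Finset (Finset α)} {S A B : Finset α} {a x : α}

structure IsPartitionOf (P : Finset (Finset α)) (S : Finset α) : Prop where
  nonempty : ∀ A ∈ P, A.Nonempty
  disjoint : ∀ A ∈ P, ∀ B ∈ P, A ≠ B → Disjoint A B
  sup_eq : P.sup id = S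

namespace IsPartitionOf

theorem subset (hP : IsPartitionOf P S) (hA : A ∈ P) : A ⊆ S :=
  hP.sup_eq ▸ le_sup (f := id) hA

theorem exists_mem (hP : IsPartitionOf P S) (hx : x ∈ S) : ∃ B ∈ P, x ∈ B :=
  mem_sup.mp (hP.sup_eq ▸ hx)

theorem eq_of_mem (hP : IsPartitionOf P S) (hA : A ∈ P) (hB : B ∈ P) (hxA : x ∈ A)
    (hxB : x ∈ B) : A = B := by
  by_contra hAB
  exact disjoint_left.mp (hP.disjoint A hA B hB hAB) hxA hxB

theorem notMem_of_disjoint (hP : IsPartitionOf P S) (hB : B.Nonempty) (hBS : Disjoint B S) :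
    B ∉ P := fun h =>
  hB.ne_empty ((disjoint_self_iff_empty B).mp (hBS.mono_right (hP.subset h)))

theorem eq_empty_iff (hP : IsPartitionOf P S) : P = ∅ ↔ S = ∅ := by
  refine ⟨fun h => by rw [← hP.sup_eq, h, sup_empty]; rfl, fun h => ?_⟩
  rw [eq_empty_iff_forall_notMem]
  intro A hA
  obtain ⟨x, hx⟩ := hP.nonempty A hA
  simpa [h] using hP.subset hA hx

theorem insert_of_disjoint (hP : IsPartitionOf P S) (hB : B.Nonempty) (hBS : Disjoint B S) :
    IsPartitionOf (insert B P) (B ∪ S) where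
  nonempty A hA := by
    rcases mem_insert.mp hA with rfl | hAP
    exacts [hB, hP.nonempty A hAP]
  disjoint A hA C hC hAC := by
    rcases mem_insert.mp hA with rfl | hAP <;> rcases mem_insert.mp hC with rfl | hCP
    · exact absurd rfl hAC
    · exact hBS.mono_right (hP.subset hCP)
    · exact (hBS.mono_right (hP.subset hAP)).symm
    · exact hP.disjoint A hAP C hCP hAC
  sup_eq := by rw [sup_insert, hP.sup_eq]; rfl

theorem erase (hP : IsPartitionOf P S) (hB : B ∈ P) : IsPartitionOf (P.erase B) (S \ B) where
  nonempty A hA := hP.nonempty A (mem_of_mem_erase hA)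
  disjoint A hA C hC := hP.disjoint A (mem_of_mem_erase hA) C (mem_of_mem_erase hC)
  sup_eq := by
    ext x
    simp only [mem_sup, mem_erase, id_eq, mem_sdiff]
    constructor
    · rintro ⟨A, ⟨hAB, hA⟩, hxA⟩
      exact ⟨hP.subset hA hxA, fun hxB => hAB (hP.eq_of_mem hA hB hxA hxB)⟩
    · rintro ⟨hxS, hxB⟩
      obtain ⟨A, hA, hxA⟩ := hP.exists_mem hxS
      exact ⟨A, ⟨fun h => hxB (h ▸ hxA), hA⟩, hxA⟩

theorem replace (hP : IsPartitionOf P S) (hB : B ∈ P) (hA : A.Nonempty)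
    (hAS : Disjoint A (S \ B)) : IsPartitionOf (insert A (P.erase B)) (A ∪ S \ B) :=
  (hP.erase hB).insert_of_disjoint hA hAS

theorem card_replace (hP : IsPartitionOf P S) (hB : B ∈ P) (hA : A.Nonempty)
    (hAS : Disjoint A (S \ B)) : #(insert A (P.erase B)) = #P := by
  rw [card_insert_of_notMem ((hP.erase hB).notMem_of_disjoint hA hAS),
    card_erase_add_one hB]

theorem exists_label (hP : IsPartitionOf P S) :
    ∃ h : α → ℕ, ∀ x ∈ S, ∀ y ∈ S, h x = h y ↔ ∃ B ∈ P, x ∈ B ∧ y ∈ B := by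
  choose! blk hblk hmem using fun x (hx : x ∈ S) => hP.exists_mem hx
  refine ⟨fun x => P.toList.idxOf (blk x), fun x hx y hy => ⟨fun h => ?_, ?_⟩⟩
  · have hxy : blk x = blk y := (List.idxOf_inj (mem_toList.mpr (hblk x hx))).mp h
    exact ⟨blk x, hblk x hx, hmem x hx, hxy ▸ hmem y hy⟩
  · rintro ⟨B, hB, hxB, hyB⟩
    dsimp only
    rw [hP.eq_of_mem (hblk x hx) hB (hmem x hx) hxB, hP.eq_of_mem (hblk y hy) hB (hmem y hy) hyB]

theorem insert_into_block (hQ : IsPartitionOf Q S) (hB : B ∈ Q) (ha : a ∉ S) :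
    IsPartitionOf (insert (insert a B) (Q.erase B)) (insert a S) ∧
      #(insert (insert a B) (Q.erase B)) = #Q := by
  have hdisj : Disjoint (insert a B) (S \ B) :=
    disjoint_insert_left.mpr ⟨fun h => ha (mem_sdiff.mp h).1, disjoint_sdiff⟩
  have hunion : insert a B ∪ S \ B = insert a S := by
    rw [insert_union, union_sdiff_of_subset (hQ.subset hB)]
  exact ⟨hunion ▸ hQ.replace hB (insert_nonempty a B) hdisj,
    hQ.card_replace hB (insert_nonempty a B) hdisj⟩

theorem insert_into_block_injective {Q' : Finset (Finset α)} {B' : Finset α}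
    (hQ : IsPartitionOf Q S) (hQ' : IsPartitionOf Q' S) (hB : B ∈ Q) (hB' : B' ∈ Q')
    (ha : a ∉ S) (heq : insert (insert a B) (Q.erase B) = insert (insert a B') (Q'.erase B')) :
    Q = Q' ∧ B = B' := by
  have hBB' : insert a B = insert a B' := (hQ.insert_into_block hB ha).1.eq_of_mem
    (mem_insert_self _ _) (heq ▸ mem_insert_self _ _) (mem_insert_self a B) (mem_insert_self a B')
  have haB : a ∉ B := fun h => ha (hQ.subset hB h)
  have haB' : a ∉ B' := fun h => ha (hQ'.subset hB' h)
  obtain rfl : B = B' := by rw [← erase_insert haB, hBB', erase_insert haB']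
  have hnotMem : ∀ {Q}, IsPartitionOf Q S → insert a B ∉ Q.erase B :=
    fun hQ h => ha (hQ.subset (mem_of_mem_erase h) (mem_insert_self a B))
  have hrest : Q.erase B = Q'.erase B := by
    rw [← erase_insert (hnotMem hQ), heq, erase_insert (hnotMem hQ')]
  exact ⟨by rw [← insert_erase hB, hrest, insert_erase hB'], rfl⟩

theorem exists_eq_insert_into_block (hP : IsPartitionOf P (insert a S)) (ha : a ∉ S)
    (haP : {a} ∉ P) :
    ∃ Q, IsPartitionOf Q S ∧ #Q = #P ∧ ∃ B ∈ Q, insert (insert a B) (Q.erase B) = P := by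
  obtain ⟨B, hB, haB⟩ := hP.exists_mem (mem_insert_self a S)
  have hne : (B.erase a).Nonempty :=
    ((nontrivial_iff_ne_singleton haB).mpr fun h => haP (h ▸ hB)).erase_nonempty
  have hdisj : Disjoint (B.erase a) (insert a S \ B) := disjoint_sdiff.mono_left (erase_subset a B)
  have hunion : B.erase a ∪ insert a S \ B = S := by
    have hBS := hP.subset hB
    ext x
    have := @hBS x
    grind
  have hnotMem : B.erase a ∉ P.erase B := fun h => by
    obtain ⟨x, hx⟩ := hne
    exact ne_of_mem_erase h (hP.eq_of_mem (mem_of_mem_erase h) hB hx (mem_of_mem_erase hx))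
  refine ⟨_, hunion ▸ hP.replace hB hne hdisj, hP.card_replace hB hne hdisj, B.erase a,
    mem_insert_self _ _, ?_⟩
  rw [insert_erase haB, erase_insert hnotMem, insert_erase hB]

end IsPartitionOf

noncomputable def partitionsOfCard (S : Finset α) (c : ℕ) : Finset (Finset (Finset α)) :=
  S.powerset.powerset.filter fun P => IsPartitionOf P S ∧ #P = c

theorem mem_partitionsOfCard {c : ℕ} :
    P ∈ partitionsOfCard S c ↔ IsPartitionOf P S ∧ #P = c := by
  rw [partitionsOfCard, mem_filter, mem_powerset, and_iff_right_iff_imp]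
  exact fun h _ hA => mem_powerset.mpr (h.1.subset hA)

theorem card_partitionsOfCard_empty (c : ℕ) :
    #(partitionsOfCard (∅ : Finset α) c) = stirling2 0 c := by
  have hempty : ∀ {P : Finset (Finset α)}, IsPartitionOf P ∅ → P = ∅ := fun hP =>
    hP.eq_empty_iff.mpr rfl
  cases c with
  | zero =>
    have : partitionsOfCard (∅ : Finset α) 0 = {∅} := by
      ext P
      rw [mem_partitionsOfCard, mem_singleton]
      refine ⟨fun h => hempty h.1, ?_⟩
      rintro rfl
      exact ⟨⟨by simp, by simp, rfl⟩, rfl⟩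
    rw [this, card_singleton]; rfl
  | succ k =>
    have : partitionsOfCard (∅ : Finset α) (k + 1) = ∅ :=
      eq_empty_of_forall_notMem fun P hP => by
        obtain ⟨hP, hcard⟩ := mem_partitionsOfCard.mp hP
        simp [hempty hP] at hcard
    rw [this, card_empty]; rfl

theorem partitionsOfCard_zero (hS : S.Nonempty) : partitionsOfCard S 0 = ∅ :=
  eq_empty_of_forall_notMem fun _ hP =>
    have hP := mem_partitionsOfCard.mp hP
    hS.ne_empty (hP.1.eq_empty_iff.mp (card_eq_zero.mp hP.2))

theorem card_filter_singleton_mem_partitionsOfCard (ha : a ∉ S) (k : ℕ) :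
    #((partitionsOfCard (insert a S) (k + 1)).filter ({a} ∈ ·)) = #(partitionsOfCard S k) := by
  have hdisj : Disjoint {a} S := disjoint_singleton_left.mpr ha
  refine card_bij' (fun P _ => P.erase {a}) (fun Q _ => insert {a} Q) ?_ ?_ ?_ ?_
  · intro P hP
    obtain ⟨hP, haP⟩ := mem_filter.mp hP
    obtain ⟨hP, hcard⟩ := mem_partitionsOfCard.mp hP
    refine mem_partitionsOfCard.mpr ⟨?_, by rw [card_erase_of_mem haP, hcard]; rfl⟩
    have := hP.erase haP
    rwa [insert_sdiff_of_mem S (mem_singleton_self a), sdiff_singleton_eq_erase,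
      erase_eq_of_notMem ha] at this
  · intro Q hQ
    obtain ⟨hQ, hcard⟩ := mem_partitionsOfCard.mp hQ
    refine mem_filter.mpr ⟨mem_partitionsOfCard.mpr ⟨?_, ?_⟩, mem_insert_self _ _⟩
    · simpa [← insert_eq] using hQ.insert_of_disjoint (singleton_nonempty a) hdisj
    · rw [card_insert_of_notMem (hQ.notMem_of_disjoint (singleton_nonempty a) hdisj), hcard]
  · exact fun P hP => insert_erase (mem_filter.mp hP).2
  · exact fun Q hQ => erase_insert
      ((mem_partitionsOfCard.mp hQ).1.notMem_of_disjoint (singleton_nonempty a) hdisj)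

theorem card_filter_singleton_notMem_partitionsOfCard (ha : a ∉ S) (k : ℕ) :
    #((partitionsOfCard (insert a S) (k + 1)).filter ({a} ∉ ·)) =
      (k + 1) * #(partitionsOfCard S (k + 1)) := by
  have hsigma : #((partitionsOfCard S (k + 1)).sigma fun Q => Q) =
      (k + 1) * #(partitionsOfCard S (k + 1)) := by
    rw [card_sigma, sum_const_nat fun Q hQ => (mem_partitionsOfCard.mp hQ).2, mul_comm]
  rw [← hsigma]
  symm
  refine card_bij (fun q _ => insert (insert a q.2) (q.1.erase q.2)) ?_ ?_ ?_
  · rintro ⟨Q, B⟩ hq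
    obtain ⟨hQ, hB⟩ := mem_sigma.mp hq
    obtain ⟨hQ, hcard⟩ := mem_partitionsOfCard.mp hQ
    obtain ⟨hP, hPcard⟩ := hQ.insert_into_block hB ha
    refine mem_filter.mpr ⟨mem_partitionsOfCard.mpr ⟨hP, hPcard.trans hcard⟩, fun haP => ?_⟩
    have hsingle : {a} = insert a B :=
      hP.eq_of_mem haP (mem_insert_self _ _) (mem_singleton_self a) (mem_insert_self a B)
    obtain ⟨b, hb⟩ := hQ.nonempty B hB
    have hba : b = a := mem_singleton.mp (hsingle ▸ mem_insert_of_mem hb)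
    exact ha (hba ▸ hQ.subset hB hb)
  · rintro ⟨Q, B⟩ hq ⟨Q', B'⟩ hq' heq
    obtain ⟨hQ, hB⟩ := mem_sigma.mp hq
    obtain ⟨hQ', hB'⟩ := mem_sigma.mp hq'
    obtain ⟨rfl, rfl⟩ := IsPartitionOf.insert_into_block_injective
      (mem_partitionsOfCard.mp hQ).1 (mem_partitionsOfCard.mp hQ').1 hB hB' ha heq
    rfl
  · intro P hP
    obtain ⟨hP, haP⟩ := mem_filter.mp hP
    obtain ⟨hP, hcard⟩ := mem_partitionsOfCard.mp hP
    obtain ⟨Q, hQ, hQcard, B, hB, rfl⟩ := hP.exists_eq_insert_into_block ha haP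
    exact ⟨⟨Q, B⟩, mem_sigma.mpr ⟨mem_partitionsOfCard.mpr ⟨hQ, hQcard.trans hcard⟩, hB⟩, rfl⟩

theorem card_partitionsOfCard (S : Finset α) (c : ℕ) :
    #(partitionsOfCard S c) = stirling2 #S c := by
  induction S using Finset.induction_on generalizing c with
  | empty => exact card_partitionsOfCard_empty c
  | insert a S ha ih =>
    rw [card_insert_of_notMem ha]
    cases c with
    | zero => rw [partitionsOfCard_zero (insert_nonempty a S)]; rfl
    | succ k =>
      rw [← card_filter_add_card_filter_not ({a} ∈ ·),
        card_filter_singleton_mem_partitionsOfCard ha,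
        card_filter_singleton_notMem_partitionsOfCard ha, ih, ih, add_comm]
      rfl

def fiberPartition (S : Finset α) (f : α → ℕ) : Finset (Finset α) :=
  (S.image f).image fun v => S.filter fun x => f x = v

theorem mem_fiberPartition {f : α → ℕ} :
    A ∈ fiberPartition S f ↔ ∃ x ∈ S, S.filter (fun y => f y = f x) = A := by
  simp only [fiberPartition, mem_image, exists_exists_and_eq_and]

theorem isPartitionOf_fiberPartition (S : Finset α) (f : α → ℕ) :
    IsPartitionOf (fiberPartition S f) S where
  nonempty A hA := by
    obtain ⟨x, hx, rfl⟩ := mem_fiberPartition.mp hA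
    exact ⟨x, mem_filter.mpr ⟨hx, rfl⟩⟩
  disjoint A hA C hC hAC := by
    obtain ⟨x, -, rfl⟩ := mem_fiberPartition.mp hA
    obtain ⟨y, -, rfl⟩ := mem_fiberPartition.mp hC
    refine disjoint_left.mpr fun z hzx hzy => hAC ?_
    rw [← (mem_filter.mp hzx).2, ← (mem_filter.mp hzy).2]
  sup_eq := by
    ext x
    simp only [mem_sup, id_eq, mem_fiberPartition]
    constructor
    · rintro ⟨A, ⟨y, -, rfl⟩, hxA⟩
      exact (mem_filter.mp hxA).1
    · intro hx
      exact ⟨_, ⟨x, hx, rfl⟩, mem_filter.mpr ⟨hx, rfl⟩⟩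

theorem IsPartitionOf.fiberPartition_eq {f : α → ℕ} (hP : IsPartitionOf P S)
    (hf : ∀ x ∈ S, ∀ y ∈ S, f x = f y ↔ ∃ B ∈ P, x ∈ B ∧ y ∈ B) :
    fiberPartition S f = P := by
  have hblock : ∀ B ∈ P, ∀ x ∈ B, S.filter (fun y => f y = f x) = B := by
    intro B hB x hxB
    ext y
    rw [mem_filter]
    constructor
    · rintro ⟨hyS, hfy⟩
      obtain ⟨C, hC, hyC, hxC⟩ := (hf y hyS x (hP.subset hB hxB)).mp hfy
      exact hP.eq_of_mem hC hB hxC hxB ▸ hyC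
    · intro hyB
      have hyS := hP.subset hB hyB
      exact ⟨hyS, (hf y hyS x (hP.subset hB hxB)).mpr ⟨B, hB, hyB, hxB⟩⟩
  ext B
  rw [mem_fiberPartition]
  constructor
  · rintro ⟨x, hxS, rfl⟩
    obtain ⟨C, hC, hxC⟩ := hP.exists_mem hxS
    rwa [hblock C hC x hxC]
  · intro hB
    obtain ⟨x, hx⟩ := hP.nonempty B hB
    exact ⟨x, hP.subset hB hx, hblock B hB x hx⟩

end Partitions

theorem BTree.exists_realizes_eq_on_Ico {ℓ : ℕ} (i : Fin ℓ) (g : ℕ → ℕ) (t : BTree) (a : ℕ) :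
    ∃ f, t.Realizes ℓ f ∧
      ∀ (x : Fin ℓ → ℝ) (j : ℕ), a ≤ j → j < a + t.leaves → x i = j → f x = g j := by
  induction t generalizing a with
  | leaf =>
    refine ⟨fun _ => g a, .leaf (g a), fun x j haj hja _ => ?_⟩
    rw [show j = a by simp only [BTree.leaves] at hja; omega]
  | node l r ihl ihr =>
    obtain ⟨fl, hfl, hfl_eq⟩ := ihl a
    obtain ⟨fr, hfr, hfr_eq⟩ := ihr (a + l.leaves)
    refine ⟨_, .node l r i ((a + l.leaves : ℕ) - 1 : ℝ) fl fr hfl hfr, fun x j haj hja hx => ?_⟩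
    simp only [BTree.leaves] at hja
    have hsplit : x i ≤ ((a + l.leaves : ℕ) - 1 : ℝ) ↔ j < a + l.leaves := by
      rw [hx, le_sub_iff_add_le]
      exact_mod_cast Nat.add_one_le_iff
    by_cases hj : j < a + l.leaves
    · rw [if_pos (hsplit.mpr hj)]
      exact hfl_eq x j haj hj hx
    · rw [if_neg (mt hsplit.mp hj)]
      exact hfr_eq x j (by omega) (by omega) hx

noncomputable def diagonalSample (ℓ m : ℕ) : Finset (Fin ℓ → ℝ) :=
  (range m).image fun j : ℕ => fun _ : Fin ℓ => (j : ℝ)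

theorem card_diagonalSample {ℓ : ℕ} (i : Fin ℓ) (m : ℕ) : #(diagonalSample ℓ m) = m := by
  rw [diagonalSample, card_image_of_injective _ fun j k h => by exact_mod_cast congrFun h i,
    card_range]

theorem exists_realizes_fiberPartition_diagonalSample {ℓ : ℕ} (i : Fin ℓ) {t : BTree} {m : ℕ}
    (hm : m ≤ t.leaves) {P : Finset (Finset (Fin ℓ → ℝ))}
    (hP : IsPartitionOf P (diagonalSample ℓ m)) :
    ∃ f, t.Realizes ℓ f ∧ fiberPartition (diagonalSample ℓ m) f = P := by
  obtain ⟨h, hh⟩ := hP.exists_label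
  obtain ⟨f, hf, hfg⟩ := t.exists_realizes_eq_on_Ico i (fun j => h fun _ => (j : ℝ)) 0
  have hfh : ∀ x ∈ diagonalSample ℓ m, f x = h x := by
    intro x hx
    obtain ⟨j, hj, rfl⟩ := mem_image.mp hx
    exact hfg _ j (Nat.zero_le j) (by rw [mem_range] at hj; omega) rfl
  refine ⟨f, hf, hP.fiberPartition_eq fun x hx y hy => ?_⟩
  rw [hfh x hx, hfh y hy]
  exact hh x hx y hy

def BTree.realizablePartitions (ℓ : ℕ) (t : BTree) (c : ℕ) (S : Finset (Fin ℓ → ℝ)) :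
    Set (Finset (Finset (Fin ℓ → ℝ))) :=
  {P | ∃ f, t.Realizes ℓ f ∧ P = fiberPartition S f ∧ #P = c}

namespace BTree

variable {ℓ : ℕ} (t : BTree) (c : ℕ)

theorem realizablePartitions_subset (S : Finset (Fin ℓ → ℝ)) :
    t.realizablePartitions ℓ c S ⊆ partitionsOfCard S c := by
  rintro P ⟨f, -, rfl, hc⟩
  exact mem_partitionsOfCard.mpr ⟨isPartitionOf_fiberPartition S f, hc⟩

theorem ncard_realizablePartitions_le (S : Finset (Fin ℓ → ℝ)) :
    (t.realizablePartitions ℓ c S).ncard ≤ stirling2 #S c := by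
  rw [← card_partitionsOfCard, ← Set.ncard_coe_finset]
  exact Set.ncard_le_ncard (t.realizablePartitions_subset c S) (finite_toSet _)

theorem realizablePartitions_diagonalSample (i : Fin ℓ) {m : ℕ} (hm : m ≤ t.leaves) :
    t.realizablePartitions ℓ c (diagonalSample ℓ m) = partitionsOfCard (diagonalSample ℓ m) c := by
  refine (t.realizablePartitions_subset c _).antisymm fun P hP => ?_
  obtain ⟨hP, hc⟩ := mem_partitionsOfCard.mp hP
  obtain ⟨f, hf, hfP⟩ := exists_realizes_fiberPartition_diagonalSample i hm hP
  exact ⟨f, hf, hfP.symm, hc⟩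

end BTree

theorem partFn_eq_stirling_of_le_leaves_general (ℓ : ℕ) (hℓ : 1 ≤ ℓ) (t : BTree) (m c : ℕ)
    (hm : m ≤ t.leaves) :
    BTree.partFn ℓ t c m = stirling2 m c ∧
    ∃ S : Finset (Fin ℓ → ℝ), S.card = m ∧
      ∀ P : Finset (Finset (Fin ℓ → ℝ)), P.card = c → (∀ A ∈ P, A.Nonempty) →
        (∀ A ∈ P, ∀ B ∈ P, A ≠ B → Disjoint A B) → P.sup id = S →
        ∃ f, BTree.Realizes ℓ t f ∧
          P = (S.image f).image (fun v => S.filter (fun x => f x = v)) := by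
  let i : Fin ℓ := ⟨0, hℓ⟩
  have hcard := card_diagonalSample i m
  refine ⟨IsGreatest.csSup_eq ⟨⟨diagonalSample ℓ m, hcard, ?_⟩, ?_⟩,
    diagonalSample ℓ m, hcard, fun P _ hne hdisj hsup => ?_⟩
  · change stirling2 m c = (t.realizablePartitions ℓ c _).ncard
    rw [t.realizablePartitions_diagonalSample c i hm, Set.ncard_coe_finset,
      card_partitionsOfCard, hcard]
  · rintro n ⟨S, rfl, rfl⟩
    exact t.ncard_realizablePartitions_le c S
  · obtain ⟨f, hf, hfP⟩ := exists_realizes_fiberPartition_diagonalSample i hm ⟨hne, hdisj, hsup⟩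
    exact ⟨f, hf, hfP.symm⟩

/-- If `m ≤ L_T` then for every `c ≤ m` the `c`-partitioning function equals the Stirling
number `S(m,c)`: the tree can realize every `c`-partition of some `m`-point sample. -/
theorem partFn_eq_stirling_of_le_leaves (ℓ : ℕ) (hℓ : 1 ≤ ℓ) (t : BTree) (m c : ℕ)
    (hm : m ≤ t.leaves) (hc : c ≤ m) :
    BTree.partFn ℓ t c m = stirling2 m c ∧
    ∃ S : Finset (Fin ℓ → ℝ), S.card = m ∧
      ∀ P : Finset (Finset (Fin ℓ → ℝ)), P.card = c → (∀ A ∈ P, A.Nonempty) →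
        (∀ A ∈ P, ∀ B ∈ P, A ≠ B → Disjoint A B) → P.sup id = S →
        ∃ f, BTree.Realizes ℓ t f ∧
          P = (S.image f).image (fun v => S.filter (fun x => f x = v)) :=
  partFn_eq_stirling_of_le_leaves_general ℓ hℓ t m c hm
end

section
/- Let T be a binary decision tree class on ℝ^ℓ with left subtree T_l and right subtree T_r and with π²_{T}(m) satisfying the recursion π²_T(m) ≤ 2ℓ(m − L_T)(1 + 2π²_{T_l}(m) + 2π²_{T_r}(m) + 2π²_{T_l}(m)π²_{T_r}(m)) for m > L_T. Then π²_T(m) ≤ (C m ℓ)^N for a universal constant C ≥ 14, where N = L_T − 1 is the number of internal nodes. -/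
open scoped Classical

lemma BTree.one_le_leaves : ∀ t : BTree, 1 ≤ t.leaves
  | .leaf => le_refl 1
  | .node l r => by
      have := one_le_leaves l; have := one_le_leaves r
      simp only [BTree.leaves]; omega

/-- If a 2-partitioning function `π` on binary tree structures vanishes on leaves, is always
bounded by the total number of 2-partitions `2^(m−1) − 1`, and satisfies the recursion
`π_T(m) ≤ 2ℓ(m − L_T)(1 + 2π_{T_l}(m) + 2π_{T_r}(m) + 2π_{T_l}(m)π_{T_r}(m))` for
`m > L_T`, then `π_T(m) ≤ (Cmℓ)^N` for any constant `C ≥ 14`, where `N = L_T − 1` is the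
number of internal nodes. -/
theorem partFn_polynomial_bound (ℓ C : ℕ) (hℓ : 1 ≤ ℓ) (hC : 14 ≤ C)
    (π : BTree → ℕ → ℕ)
    (hleaf : ∀ m, π BTree.leaf m = 0)
    (htriv : ∀ t m, π t m ≤ 2 ^ (m - 1) - 1)
    (hrec : ∀ l r m, (BTree.node l r).leaves < m →
      π (BTree.node l r) m ≤ 2 * ℓ * (m - (BTree.node l r).leaves) *
        (1 + 2 * π l m + 2 * π r m + 2 * (π l m * π r m)))
    (t : BTree) (m : ℕ) :
    π t m ≤ (C * m * ℓ) ^ (t.leaves - 1) := by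
  induction t with
  | leaf => simp [hleaf, BTree.leaves]
  | node l r ihl ihr =>
    set X := C * m * ℓ with hX
    rcases Nat.eq_zero_or_pos m with hm | hm
    · have h0 := htriv (BTree.node l r) m
      subst hm
      simp only [Nat.zero_sub, pow_zero] at h0
      omega
    have hX14 : 14 ≤ X := by
      calc (14 : ℕ) = 14 * 1 * 1 := by ring
      _ ≤ C * m * ℓ := by
          exact Nat.mul_le_mul (Nat.mul_le_mul hC hm) hℓ
    have hX1 : 1 ≤ X := by omega
    have hLl := l.one_le_leaves
    have hLr := r.one_le_leaves
    set A := X ^ (l.leaves - 1) with hA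
    set B := X ^ (r.leaves - 1) with hB
    have hA1 : 1 ≤ A := Nat.one_le_pow _ _ (by omega)
    have hB1 : 1 ≤ B := Nat.one_le_pow _ _ (by omega)
    have hexp : (BTree.node l r).leaves - 1 = (l.leaves - 1) + (r.leaves - 1) + 1 := by
      simp only [BTree.leaves]; omega
    have hXpow : X ^ ((BTree.node l r).leaves - 1) = A * B * X := by
      rw [hexp, pow_succ, pow_add]
    by_cases hm2 : (BTree.node l r).leaves < m
    · have hr := hrec l r m hm2
      have key : 1 + 2 * π l m + 2 * π r m + 2 * (π l m * π r m) ≤ 3 * (A * B) := by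
        cases l with
        | leaf =>
          cases r with
          | leaf =>
            simp only [hleaf, hA, hB, BTree.leaves] at *
            simp
          | node r1 r2 =>
            have hA' : A = 1 := by simp [hA, BTree.leaves]
            simp only [hleaf, hA', one_mul]
            have := ihr
            omega
        | node l1 l2 =>
          have hA14 : 14 ≤ A := le_trans hX14 (Nat.le_self_pow (by
            have := l1.one_le_leaves; have := l2.one_le_leaves
            simp only [BTree.leaves]; omega) X)
          cases r with
          | leaf =>
            have hB' : B = 1 := by simp [hB, BTree.leaves]
            simp only [hleaf, hB', mul_one]
            have := ihl
            omega
          | node r1 r2 =>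
            have hB14 : 14 ≤ B := le_trans hX14 (Nat.le_self_pow (by
              have := r1.one_le_leaves; have := r2.one_le_leaves
              simp only [BTree.leaves]; omega) X)
            have ha := ihl
            have hb := ihr
            nlinarith [Nat.mul_le_mul ha hb]
      calc π (BTree.node l r) m
          ≤ 2 * ℓ * (m - (BTree.node l r).leaves) *
            (1 + 2 * π l m + 2 * π r m + 2 * (π l m * π r m)) := hr
        _ ≤ 2 * ℓ * m * (3 * (A * B)) := by
            exact Nat.mul_le_mul (Nat.mul_le_mul_left _ (Nat.sub_le _ _)) key
        _ ≤ A * B * X := by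
            rw [hX]
            have : 2 * ℓ * m * (3 * (A * B)) = (A * B) * (6 * m * ℓ) := by ring
            rw [this]
            apply Nat.mul_le_mul_left
            exact Nat.mul_le_mul_right _ (Nat.mul_le_mul_right _ (by omega))
        _ = X ^ ((BTree.node l r).leaves - 1) := hXpow.symm
    · have h0 := htriv (BTree.node l r) m
      calc π (BTree.node l r) m ≤ 2 ^ (m - 1) - 1 := h0
        _ ≤ 2 ^ (m - 1) := Nat.sub_le _ _
        _ ≤ X ^ (m - 1) := Nat.pow_le_pow_left (by omega) _
        _ ≤ X ^ ((BTree.node l r).leaves - 1) :=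
            Nat.pow_le_pow_right (by omega) (by simp only [BTree.leaves] at *; omega)
end
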